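/- Let 0 = T₀ ⋖ T₁ ⋖ ⋯ ⋖ T_m = A be a maximal green sequence with associated bricks N₁,…,N_m (T_i = Filt(T_{i-1} ∪ {N_i})). Then every object X of A admits a filtration 0 = X₀ ⊆ X₁ ⊆ ⋯ ⊆ X_m = X with X_i/X_{i-1} ∈ Filt(N_i) for each i, and this filtration is unique up to isomorphism. -/

import Mathlib

/-!
Write `T^⊥` for the objects receiving no nonzero map from `T`. The `T_i`-torsion part of `X` (the
largest subobject in `T_i`, which exists as `X` is noetherian) is characterized as a subobject
`S ∈ T_i` with `X / S ∈ T_i^⊥`. For a filtration with `X_i / X_{i-1} ∈ Filt(N_i)`, extension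
closure gives `X_i ∈ T_i`, and since `N_i ∈ T_{i-1}^⊥`, reverse induction gives
`X / X_i ∈ T_i^⊥`; so `X_i` is the `T_i`-torsion part, whence uniqueness. For existence, the
torsion parts form a filtration whose subquotients lie in `T_i ∩ T_{i-1}^⊥`, and every object of
`Filt(T_{i-1} ∪ {N_i}) ∩ T_{i-1}^⊥` lies in `Filt(N_i)`: a subobject `V ∈ T_{i-1}` of a
quotient `P / A` with `A ∈ Filt(N_i)` and `P ∈ T_{i-1}^⊥` vanishes, because a nonsplit
extension of `N_i` by an object of `T_{i-1}` lies in `T_{i-1}` by minimality of `N_i`.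
-/

open CategoryTheory CategoryTheory.Limits

universe v u

variable {C : Type u} [Category.{v} C] [Abelian C]

/-- `f, g` form a short exact sequence `0 ⟶ X₁ ⟶ X₂ ⟶ X₃ ⟶ 0`. -/
def IsSES {X₁ X₂ X₃ : C} (f : X₁ ⟶ X₂) (g : X₂ ⟶ X₃) : Prop :=
  ∃ w : f ≫ g = 0, (CategoryTheory.ShortComplex.mk f g w).ShortExact

/-- A torsion pair `(T, F)`. -/
structure TorsionPairOn (T F : Set C) : Prop where
  hom_zero : ∀ X ∈ T, ∀ Y ∈ F, ∀ f : X ⟶ Y, f = 0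
  mem_torsion : ∀ X : C, (∀ Y ∈ F, ∀ f : X ⟶ Y, f = 0) → X ∈ T
  mem_free : ∀ Y : C, (∀ X ∈ T, ∀ f : X ⟶ Y, f = 0) → Y ∈ F

def IsoClosed (S : Set C) : Prop := ∀ ⦃X Y : C⦄, (X ≅ Y) → X ∈ S → Y ∈ S

def ExtClosedSet (S : Set C) : Prop :=
  ∀ ⦃X₁ X₂ X₃ : C⦄ (f : X₁ ⟶ X₂) (g : X₂ ⟶ X₃), IsSES f g → X₁ ∈ S → X₃ ∈ S → X₂ ∈ S

def QuotClosed (S : Set C) : Prop :=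
  ∀ ⦃X Y : C⦄ (p : X ⟶ Y), Epi p → X ∈ S → Y ∈ S

structure IsTorsionClass (T : Set C) : Prop where
  zero_mem : ∀ X : C, IsZero X → X ∈ T
  iso_closed : IsoClosed T
  ext_closed : ExtClosedSet T
  quot_closed : QuotClosed T

/-- `T'` covers `T` in the lattice of torsion classes. -/
def CoversTC (T T' : Set C) : Prop :=
  T ⊆ T' ∧ T ≠ T' ∧
    ∀ S : Set C, IsTorsionClass S → T ⊆ S → S ⊆ T' → S = T ∨ S = T'

/-- The extension closure of a class of objects. -/
inductive ExtClosure (S : Set C) : C → Prop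
  | of (X : C) (h : X ∈ S) : ExtClosure S X
  | zero (X : C) (h : IsZero X) : ExtClosure S X
  | iso (X Y : C) (e : X ≅ Y) (h : ExtClosure S X) : ExtClosure S Y
  | ext (X₁ X₂ X₃ : C) (f : X₁ ⟶ X₂) (g : X₂ ⟶ X₃) (hseq : IsSES f g)
      (h₁ : ExtClosure S X₁) (h₃ : ExtClosure S X₃) : ExtClosure S X₂

def IsBrick (X : C) : Prop := ¬ IsZero X ∧ ∀ f : X ⟶ X, f = 0 ∨ IsIso f

def IsIndec (X : C) : Prop :=
  ¬ IsZero X ∧ ∀ (Y Z : C), (X ≅ Y ⊞ Z) → IsZero Y ∨ IsZero Z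

structure IsMinimalExtending (T : Set C) (M : C) : Prop where
  proper_quot_mem : ∀ ⦃Y : C⦄ (p : M ⟶ Y), Epi p → ¬ IsIso p → Y ∈ T
  ext_mem : ∀ ⦃X Tt : C⦄ (f : M ⟶ X) (g : X ⟶ Tt), IsSES f g → Tt ∈ T →
      (¬ ∃ r : X ⟶ M, f ≫ r = 𝟙 M) → X ∈ T
  hom_zero : ∀ ⦃W : C⦄, W ∈ T → ∀ f : W ⟶ M, f = 0

/-- A finite filtration of `X` by subobjects. -/
structure FiltrationOf (X : C) where
  len : ℕ
  obj : Fin (len + 1) → C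
  map : ∀ i : Fin len, obj i.castSucc ⟶ obj i.succ
  mono : ∀ i, Mono (map i)
  zero : IsZero (obj 0)
  top : obj (Fin.last len) ≅ X

noncomputable def FiltrationOf.subquot {X : C} (F : FiltrationOf X) (i : Fin F.len) : C :=
  cokernel (F.map i)

variable {P : Type*} [LinearOrder P]

def Semistable (φ : C → P) (M : C) : Prop :=
  ¬ IsZero M ∧ ∀ ⦃L : C⦄ (f : L ⟶ M), Mono f → ¬ IsZero L → φ L ≤ φ M

def StableObj (φ : C → P) (M : C) : Prop :=
  ¬ IsZero M ∧ ∀ ⦃L : C⦄ (f : L ⟶ M), Mono f → ¬ IsZero L → ¬ IsIso f → φ L < φ M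

structure IsStabilityFunction (φ : C → P) : Prop where
  iso_invariant : ∀ ⦃X Y : C⦄, (X ≅ Y) → φ X = φ Y
  seesaw : ∀ ⦃L M N : C⦄ (f : L ⟶ M) (g : M ⟶ N), IsSES f g →
      ¬ IsZero L → ¬ IsZero M → ¬ IsZero N →
      (φ L = φ M ∧ φ M = φ N) ∨ (φ L < φ M ∧ φ M < φ N) ∨ (φ N < φ M ∧ φ M < φ L)

/-- A maximal green sequence of torsion classes. -/
structure IsMGS {C : Type u} [Category.{v} C] [Abelian C]
    (m : ℕ) (T : Fin (m + 1) → Set C) : Prop where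
  tors : ∀ i, IsTorsionClass (T i)
  bot : ∀ X ∈ T 0, IsZero X
  top : ∀ X : C, X ∈ T (Fin.last m)
  cover : ∀ i : Fin m, CoversTC (T i.castSucc) (T i.succ)

namespace IsSES

variable {X₁ X₂ X₃ : C} {f : X₁ ⟶ X₂} {g : X₂ ⟶ X₃}

lemma shortExact (h : IsSES f g) : (ShortComplex.mk f g h.fst).ShortExact := h.snd

lemma mono_f (h : IsSES f g) : Mono f := h.shortExact.mono_f

lemma of_iso (h : IsSES f g) {Y₁ Y₃ : C} (e₁ : X₁ ≅ Y₁) (e₃ : X₃ ≅ Y₃) :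
    IsSES (e₁.inv ≫ f) (g ≫ e₃.hom) := by
  obtain ⟨w, hS⟩ := h
  exact ⟨by simp [reassoc_of% w], ShortComplex.shortExact_of_iso
    (ShortComplex.isoMk (S₁ := .mk f g w) e₁ (Iso.refl _) e₃ (by simp) (by simp)) hS⟩

noncomputable def cokernelIso (h : IsSES f g) : cokernel f ≅ X₃ :=
  IsColimit.coconePointUniqueUpToIso (cokernelIsCokernel f) h.shortExact.gIsCokernel

end IsSES

lemma isSES_cokernel {X Y : C} (f : X ⟶ Y) [Mono f] : IsSES f (cokernel.π f) :=
  ⟨cokernel.condition f, { exact := ShortComplex.exact_cokernel f }⟩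

/-- The third isomorphism theorem, cut out of the kernel–cokernel sequence of `u ≫ f`, whose
connecting map vanishes as `f` is mono. -/
lemma isSES_cokernel_map_comp {A₁ A P : C} (u : A₁ ⟶ A) (f : A ⟶ P) [Mono f] :
    IsSES (cokernel.map u (u ≫ f) (𝟙 _) f (by simp))
      (cokernel.map (u ≫ f) f u (𝟙 _) (by simp)) := by
  have hE := kernelCokernelCompSequence_exact u f
  have hδ : kernelCokernelCompSequence.δ u f = 0 := (isZero_kernel_of_mono f).eq_of_src _ _
  have : Mono (cokernel.map u (u ≫ f) (𝟙 _) f (by simp)) := (hE.exact 2).mono_g hδ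
  have : Epi (cokernel.map (u ≫ f) f u (𝟙 _) (by simp)) :=
    inferInstanceAs (Epi ((kernelCokernelCompSequence u f).map' 4 5))
  exact ⟨by ext; simp, { exact := hE.exact 3 }⟩

lemma IsSES.pullback {A P W V : C} {f : A ⟶ P} {g : P ⟶ W} (hfg : IsSES f g)
    (v : V ⟶ W) [Mono v] :
    ∃ k : A ⟶ pullback g v, k ≫ pullback.fst g v = f ∧ IsSES k (pullback.snd g v) := by
  obtain ⟨w, hS⟩ := hfg
  have := hS.mono_f
  have := hS.epi_g
  have hw : f ≫ g = (0 : A ⟶ V) ≫ v := by rw [w, zero_comp]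
  have hk : pullback.lift f 0 hw ≫ pullback.fst g v = f := pullback.lift_fst _ _ _
  have hk0 : pullback.lift f 0 hw ≫ pullback.snd g v = 0 := pullback.lift_snd _ _ _
  have : Mono (pullback.lift f 0 hw) := mono_of_mono_fac hk
  refine ⟨_, hk, hk0, ShortComplex.ShortExact.mk (ShortComplex.exact_of_f_is_kernel _
    (KernelFork.IsLimit.ofι' _ hk0 fun {Z} k' hk' => ?_))⟩
  have h0 : (k' ≫ pullback.fst g v) ≫ g = 0 := by
    rw [Category.assoc, pullback.condition, ← Category.assoc, hk', zero_comp]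
  refine ⟨hS.exact.lift _ h0, pullback.hom_ext ?_ ?_⟩
  · simpa [hk] using hS.exact.lift_f _ h0
  · simp [hk0, hk']

lemma ExtClosure.mono {S S' : Set C} (h : S ⊆ S') {X : C} (hX : ExtClosure S X) :
    ExtClosure S' X := by
  induction hX with
  | of X hX => exact .of X (h hX)
  | zero X hX => exact .zero X hX
  | iso X Y e _ ih => exact .iso X Y e ih
  | ext X₁ X₂ X₃ f g hfg _ _ ih₁ ih₃ => exact .ext X₁ X₂ X₃ f g hfg ih₁ ih₃

def HomFree (T : Set C) (Y : C) : Prop := ∀ V ∈ T, ∀ f : V ⟶ Y, f = 0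

namespace HomFree

variable {T : Set C}

lemma of_mono {X Y : C} (hY : HomFree T Y) (m : X ⟶ Y) [Mono m] : HomFree T X :=
  fun V hV f => by rw [← cancel_mono m, zero_comp]; exact hY V hV (f ≫ m)

lemma of_iso {X Y : C} (hX : HomFree T X) (e : X ≅ Y) : HomFree T Y :=
  hX.of_mono e.inv

lemma of_isZero {Y : C} (h : IsZero Y) : HomFree T Y :=
  fun _ _ f => h.eq_of_tgt f 0

lemma anti {T' : Set C} {Y : C} (hY : HomFree T Y) (h : T' ⊆ T) : HomFree T' Y :=
  fun V hV f => hY V (h hV) f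

lemma isZero_of_mem {Y : C} (hY : HomFree T Y) (h : Y ∈ T) : IsZero Y :=
  (IsZero.iff_id_eq_zero Y).2 (hY Y h (𝟙 Y))

lemma of_isSES {X₁ X₂ X₃ : C} {f : X₁ ⟶ X₂} {g : X₂ ⟶ X₃} (hfg : IsSES f g)
    (h₁ : HomFree T X₁) (h₃ : HomFree T X₃) : HomFree T X₂ := fun V hV u => by
  obtain ⟨w, hS⟩ := hfg
  have := hS.mono_f
  have hug : u ≫ g = 0 := h₃ V hV (u ≫ g)
  rw [← hS.exact.lift_f u hug, h₁ V hV (hS.exact.lift u hug), zero_comp]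

lemma of_extClosure {S : Set C} (hS : ∀ s ∈ S, HomFree T s) {Y : C} (hY : ExtClosure S Y) :
    HomFree T Y := by
  induction hY with
  | of X hX => exact hS X hX
  | zero X hX => exact of_isZero hX
  | iso X Y e _ ih => exact ih.of_iso e
  | ext X₁ X₂ X₃ f g hfg _ _ ih₁ ih₃ => exact of_isSES hfg ih₁ ih₃

/-- Pulling back along the image of a map `V ⟶ W` from `V ∈ T` reduces `W ∈ T^⊥` to
quotients `E / A` for `A ⊆ E ⊆ P`. -/
lemma of_pullbacks (hT : QuotClosed T) {A P W : C} {f : A ⟶ P} {g : P ⟶ W} (hfg : IsSES f g)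
    (h : ∀ {E V : C} (k : A ⟶ E) (q : E ⟶ V) (e : E ⟶ P), Mono e → k ≫ e = f → IsSES k q →
      V ∈ T → IsZero V) :
    HomFree T W := fun U hU φ => by
  obtain ⟨k, hk, hkq⟩ := hfg.pullback (image.ι φ)
  have hI : IsZero (image φ) :=
    h k _ (pullback.fst _ _) inferInstance hk hkq (hT (factorThruImage φ) inferInstance hU)
  rw [← image.fac φ, hI.eq_of_src (image.ι φ) 0, comp_zero]

end HomFree

namespace IsMinimalExtending

variable {T : Set C} {M : C}

theorem isZero_of_isSES (hM : IsMinimalExtending T M) (hT : QuotClosed T) {A : C}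
    (hA : ExtClosure {M} A) {P W : C} (f : A ⟶ P) (g : P ⟶ W) (hfg : IsSES f g)
    (hW : W ∈ T) (hP : HomFree T P) : IsZero W := by
  induction hA generalizing P W with
  | of A hA =>
    subst hA
    obtain ⟨w, hS⟩ := hfg
    by_cases hsplit : ∃ r : P ⟶ A, f ≫ r = 𝟙 A
    · -- a section of `g` is a map `W ⟶ P` from `T`, hence zero
      obtain ⟨r, hr⟩ := hsplit
      let σ := ShortComplex.Splitting.ofExactOfRetraction _ hS.exact r hr hS.epi_g
      rw [IsZero.iff_id_eq_zero, ← σ.s_g, hP W hW σ.s, zero_comp]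
    · have hPT : P ∈ T := hM.ext_mem f g ⟨w, hS⟩ hW hsplit
      have := hS.epi_g
      exact IsZero.of_epi_eq_zero g ((hP.isZero_of_mem hPT).eq_of_src g 0)
  | zero A hA =>
    have : IsIso g := (hfg.shortExact.isIso_g_iff).2 hA
    rw [IsZero.iff_id_eq_zero, ← IsIso.inv_hom_id g, hP W hW (inv g), zero_comp]
  | iso A A' e _ ih =>
    exact ih (e.hom ≫ f) g (by simpa using hfg.of_iso e.symm (Iso.refl _)) hW hP
  | ext A₁ A A₃ u q huq _ _ ih₁ ih₃ =>
    have := huq.mono_f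
    have := hfg.mono_f
    have hQ : HomFree T (cokernel (u ≫ f)) :=
      HomFree.of_pullbacks hT (isSES_cokernel (u ≫ f))
        fun k q e _ _ hkq hV => ih₁ k q hkq hV (hP.of_mono e)
    exact ih₃ _ _ ((isSES_cokernel_map_comp u f).of_iso huq.cokernelIso hfg.cokernelIso) hW hQ

theorem extClosure_singleton_of_homFree (hM : IsMinimalExtending T M) (hT : QuotClosed T)
    {Z : C} (hZ : ExtClosure (T ∪ {M}) Z) (hF : HomFree T Z) : ExtClosure {M} Z := by
  induction hZ with
  | of Z hZ =>
    rcases hZ with hZ | hZ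
    · exact .zero _ (hF.isZero_of_mem hZ)
    · exact .of _ hZ
  | zero Z hZ => exact .zero _ hZ
  | iso Z Z' e _ ih => exact .iso _ _ e (ih (hF.of_iso e.symm))
  | ext X₁ X₂ X₃ f g hfg _ _ ih₁ ih₃ =>
    have := hfg.mono_f
    have h₁ : ExtClosure {M} X₁ := ih₁ (hF.of_mono f)
    have h₃ : HomFree T X₃ := HomFree.of_pullbacks hT hfg
      fun k q e _ _ hkq hV => hM.isZero_of_isSES hT h₁ k q hkq hV (hF.of_mono e)
    exact .ext _ _ _ f g hfg h₁ (ih₃ h₃)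

end IsMinimalExtending

def IsTorsionPart (T : Set C) {S X : C} (f : S ⟶ X) : Prop :=
  S ∈ T ∧ HomFree T (cokernel f)

namespace IsTorsionPart

variable {T : Set C} {X : C}

lemma le {S A : Subobject X} (hS : IsTorsionPart T S.arrow) (hA : (A : C) ∈ T) : A ≤ S :=
  Subobject.le_of_comm (Abelian.monoLift S.arrow A.arrow (hS.2 _ hA _))
    (Abelian.monoLift_comp _ _ _)

lemma mk_eq {S S' : C} {f : S ⟶ X} {f' : S' ⟶ X} [Mono f] [Mono f'] (hf : IsTorsionPart T f)
    (hf' : IsTorsionPart T f') : Subobject.mk f = Subobject.mk f' :=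
  le_antisymm
    (Subobject.mk_le_mk_of_comm (Abelian.monoLift f' f (hf'.2 _ hf.1 _))
      (Abelian.monoLift_comp _ _ _))
    (Subobject.mk_le_mk_of_comm (Abelian.monoLift f f' (hf.2 _ hf'.1 _))
      (Abelian.monoLift_comp _ _ _))

lemma homFree_cokernel_ofLE {A B : Subobject X} (hA : IsTorsionPart T A.arrow) (h : A ≤ B) :
    HomFree T (cokernel (Subobject.ofLE A B h)) := by
  have := (isSES_cokernel_map_comp (Subobject.ofLE A B h) B.arrow).mono_f
  exact (hA.2.of_iso (cokernelIsoOfEq (Subobject.ofLE_arrow h)).symm).of_mono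
    (cokernel.map _ _ (𝟙 _) B.arrow _)

end IsTorsionPart

/-- A maximal subobject in `T` is the torsion part: for `V ∈ T` inside `X / S`, its preimage
`E ⊇ S` lies in `T`, so maximality forces `S = E` and `V = 0`. -/
theorem exists_isTorsionPart {T : Set C} (hT : IsTorsionClass T) (X : C)
    [IsNoetherianObject X] : ∃ S : Subobject X, IsTorsionPart T S.arrow := by
  have hbot : ((⊥ : Subobject X) : C) ∈ T :=
    hT.zero_mem _ ((isZero_zero C).of_iso Subobject.botCoeIsoZero)
  obtain ⟨S, hS, hmax⟩ := (wellFounded_gt (α := Subobject X)).has_min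
    {A : Subobject X | (A : C) ∈ T} ⟨⊥, hbot⟩
  refine ⟨S, hS, HomFree.of_pullbacks hT.quot_closed (isSES_cokernel S.arrow)
    fun k q e _ hke hkq hV => ?_⟩
  have hE : _ ∈ T := hT.ext_closed k q hkq hS hV
  have hk : IsIso k := by
    by_contra hk
    have hlt := Subobject.mk_lt_mk_of_comm k hke hk
    rw [Subobject.mk_arrow] at hlt
    exact hmax _ (hT.iso_closed (Subobject.underlyingIso e).symm hE) hlt
  exact hkq.shortExact.isIso_f_iff.1 hk

namespace FiltrationOf

section

variable {D : Type*} [Category D] {X : D} (F : FiltrationOf X)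

def ι : ∀ i : Fin (F.len + 1), F.obj i ⟶ X :=
  Fin.reverseInduction F.top.hom fun j r => F.map j ≫ r

@[simp]
lemma ι_last : F.ι (Fin.last F.len) = F.top.hom := Fin.reverseInduction_last

@[simp]
lemma ι_castSucc (j : Fin F.len) : F.ι j.castSucc = F.map j ≫ F.ι j.succ :=
  Fin.reverseInduction_castSucc _

instance mono_ι (i : Fin (F.len + 1)) : Mono (F.ι i) := by
  induction i using Fin.reverseInduction with
  | last => rw [ι_last]; infer_instance
  | cast j _ => have := F.mono j; rw [ι_castSucc]; exact mono_comp _ _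

end

variable {X : C} (F : FiltrationOf X) {T : Fin (F.len + 1) → Set C}

lemma obj_mem (hT : ∀ i, IsTorsionClass (T i))
    (hTle : ∀ j : Fin F.len, T j.castSucc ⊆ T j.succ) (hmem : ∀ j, F.subquot j ∈ T j.succ)
    (i : Fin (F.len + 1)) : F.obj i ∈ T i := by
  induction i using Fin.induction with
  | zero => exact (hT 0).zero_mem _ F.zero
  | succ j ih =>
    have := F.mono j
    exact (hT _).ext_closed _ _ (isSES_cokernel (F.map j)) (hTle j ih) (hmem j)

lemma homFree_cokernel_ι (hTle : ∀ j : Fin F.len, T j.castSucc ⊆ T j.succ)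
    (hfree : ∀ j, HomFree (T j.castSucc) (F.subquot j)) (i : Fin (F.len + 1)) :
    HomFree (T i) (cokernel (F.ι i)) := by
  induction i using Fin.reverseInduction with
  | last => rw [ι_last]; exact .of_isZero (isZero_cokernel_of_epi _)
  | cast j ih =>
    rw [ι_castSucc]
    exact .of_isSES (isSES_cokernel_map_comp (F.map j) (F.ι j.succ)) (hfree j)
      (ih.anti (hTle j))

theorem isTorsionPart_ι (hT : ∀ i, IsTorsionClass (T i))
    (hTle : ∀ j : Fin F.len, T j.castSucc ⊆ T j.succ) (hmem : ∀ j, F.subquot j ∈ T j.succ)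
    (hfree : ∀ j, HomFree (T j.castSucc) (F.subquot j)) (i : Fin (F.len + 1)) :
    IsTorsionPart (T i) (F.ι i) :=
  ⟨F.obj_mem hT hTle hmem i, F.homFree_cokernel_ι hTle hfree i⟩

noncomputable def ofChain {m : ℕ} (s : Fin (m + 1) → Subobject X)
    (hs : ∀ i : Fin m, s i.castSucc ≤ s i.succ) (h₀ : IsZero (s 0 : C))
    (htop : s (Fin.last m) = ⊤) : FiltrationOf X where
  len := m
  obj i := s i
  map i := Subobject.ofLE _ _ (hs i)
  mono _ := inferInstance
  zero := h₀
  top := have := (Subobject.isIso_arrow_iff_eq_top _).2 htop; asIso (s (Fin.last m)).arrow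

end FiltrationOf

namespace IsMGS

variable {m : ℕ} {T : Fin (m + 1) → Set C} {N : Fin m → C}

theorem exists_filtration (hT : IsMGS m T)
    (hN : ∀ i : Fin m, IsMinimalExtending (T i.castSucc) (N i) ∧
        T i.succ = {X : C | ExtClosure (T i.castSucc ∪ {N i}) X})
    (X : C) [IsNoetherianObject X] :
    ∃ (F : FiltrationOf X) (hlen : F.len = m),
      ∀ i : Fin F.len, ExtClosure {N (Fin.cast hlen i)} (F.subquot i) := by
  choose t ht using fun i => exists_isTorsionPart (hT.tors i) X
  have hle : ∀ i : Fin m, t i.castSucc ≤ t i.succ :=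
    fun i => (ht i.succ).le ((hT.cover i).1 (ht i.castSucc).1)
  have htop : t (Fin.last m) = ⊤ := top_le_iff.1 ((ht _).le (hT.top _))
  refine ⟨.ofChain t hle (hT.bot _ (ht 0).1) htop, rfl, fun (i : Fin m) => ?_⟩
  have hmem : cokernel (Subobject.ofLE _ _ (hle i)) ∈ T i.succ :=
    (hT.tors _).quot_closed (cokernel.π _) inferInstance (ht i.succ).1
  rw [(hN i).2] at hmem
  exact (hN i).1.extClosure_singleton_of_homFree (hT.tors _).quot_closed hmem
    ((ht i.castSucc).homFree_cokernel_ofLE (hle i))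

theorem isTorsionPart_ι (hT : IsMGS m T)
    (hN : ∀ i : Fin m, IsMinimalExtending (T i.castSucc) (N i) ∧
        T i.succ = {X : C | ExtClosure (T i.castSucc ∪ {N i}) X})
    {X : C} (F : FiltrationOf X) (hlen : F.len = m)
    (hF : ∀ i : Fin F.len, ExtClosure {N (Fin.cast hlen i)} (F.subquot i)) (i : Fin (m + 1)) :
    IsTorsionPart (T i) (F.ι (Fin.cast (by omega) i)) := by
  subst hlen
  refine F.isTorsionPart_ι hT.tors (fun j => (hT.cover j).1) (fun j => ?_) (fun j => ?_) i
  · rw [(hN j).2]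
    exact (hF j).mono Set.subset_union_right
  · exact .of_extClosure (fun _ h => h ▸ (hN j).1.hom_zero) (hF j)

end IsMGS

/-- every object admits a filtration, unique up to isomorphism,
whose `i`-th subquotient lies in `Filt(N i)`, for the bricks `N i` associated to
a maximal green sequence. -/
theorem mgs_filtration_exists_unique
    {C : Type u} [Category.{v} C] [Abelian C]
    [∀ X : C, IsNoetherianObject X] [∀ X : C, IsArtinianObject X]
    (m : ℕ) (T : Fin (m + 1) → Set C) (hT : IsMGS m T) (N : Fin m → C)
    (hN : ∀ i : Fin m, IsMinimalExtending (T i.castSucc) (N i) ∧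
        T i.succ = {X : C | ExtClosure (T i.castSucc ∪ {N i}) X})
    (X : C) :
    (∃ (F : FiltrationOf X) (hlen : F.len = m),
        ∀ i : Fin F.len, ExtClosure {N (Fin.cast hlen i)} (F.subquot i)) ∧
    (∀ (F F' : FiltrationOf X) (hlen : F.len = m) (hlen' : F'.len = m),
        (∀ i : Fin F.len, ExtClosure {N (Fin.cast hlen i)} (F.subquot i)) →
        (∀ i : Fin F'.len, ExtClosure {N (Fin.cast hlen' i)} (F'.subquot i)) →
        ∀ i : Fin (m + 1),
          Nonempty (F.obj (Fin.cast (by omega) i) ≅ F'.obj (Fin.cast (by omega) i))) :=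
  ⟨hT.exists_filtration hN X, fun F F' hlen hlen' hF hF' i =>
    ⟨Subobject.isoOfMkEqMk _ _
      ((hT.isTorsionPart_ι hN F hlen hF i).mk_eq (hT.isTorsionPart_ι hN F' hlen' hF' i))⟩⟩
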